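/- arXiv:2211.07721 — 2 statements merged into one kernel-verified Lean document; each statement's English description precedes it below -/
import Mathlib

section
/- Let ≤_{T'} ⊆ ≤_T be preorders on a set X such that the identity-on-objects map T' → T is admissible, and let ≤_Q be a preorder on X with ≤_Q ⊆ ≤_{T/T'} such that the identity-on-objects map Q → T/T' is admissible. Then there exists a unique preorder ≤_P on X with ≤_{T'} ⊆ ≤_P ⊆ ≤_T such that the identity-on-objects maps T' → P and P → T are admissible and P/T' = Q. -/
section Defs

variable {α β : Type*}

/-- `f` is monotone from the relation `r` to the relation `s`. -/
def Mono (r : α → α → Prop) (s : β → β → Prop) (f : α → β) : Prop :=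
  ∀ a b, r a b → s (f a) (f b)

/-- A monotone map `f` is convex if whenever `f x ≤ w ≤ f y` there is a unique
`p` with `x ≤ p ≤ y` and `f p = w`. -/
def ConvexMap (r : α → α → Prop) (s : β → β → Prop) (f : α → β) : Prop :=
  Mono r s f ∧ ∀ x y w, s (f x) w → s w (f y) → ∃! p, r x p ∧ r p y ∧ f p = w

/-- A subset `S` is connected (w.r.t. the order relation `r`) if any two of its
elements are joined by a finite zigzag of comparable pairs lying in `S`. -/
def ConnectedIn (r : α → α → Prop) (S : Set α) : Prop :=
  ∀ x ∈ S, ∀ y ∈ S,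
    Relation.ReflTransGen (fun a b => a ∈ S ∧ b ∈ S ∧ (r a b ∨ r b a)) x y

/-- A subset `S` is order-convex w.r.t. `r`. -/
def OrdConvexIn (r : α → α → Prop) (S : Set α) : Prop :=
  ∀ x ∈ S, ∀ y ∈ S, ∀ z, r x z → r z y → z ∈ S

/-- The strict relation associated to `r`. -/
def LtRel (r : α → α → Prop) (a b : α) : Prop := r a b ∧ ¬ r b a

/-- `b` covers `a` w.r.t. `r`. -/
def CovRel (r : α → α → Prop) (a b : α) : Prop :=
  LtRel r a b ∧ ∀ c, ¬ (LtRel r a c ∧ LtRel r c b)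

/-- A contraction: a monotone surjection with connected convex fibres that lifts covers. -/
def IsContraction (r : α → α → Prop) (s : β → β → Prop) (f : α → β) : Prop :=
  Mono r s f ∧ Function.Surjective f ∧
  (∀ q, ConnectedIn r (f ⁻¹' {q}) ∧ OrdConvexIn r (f ⁻¹' {q})) ∧
  ∀ q q', CovRel s q q' → ∃ p p', CovRel r p p' ∧ f p = q ∧ f p' = q'

/-- A collapse map: a monotone surjection which partially reflects the strict order. -/
def IsCollapse (r : α → α → Prop) (s : β → β → Prop) (f : α → β) : Prop :=
  Mono r s f ∧ Function.Surjective f ∧ ∀ x y, LtRel s (f x) (f y) → LtRel r x y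

/-- `r` is a partial order relation. -/
def IsPartialOrderRel (r : α → α → Prop) : Prop :=
  (∀ a, r a a) ∧ (∀ a b c, r a b → r b c → r a c) ∧ (∀ a b, r a b → r b a → a = b)

/-- `r` is a preorder relation. -/
def IsPreorderRel (r : α → α → Prop) : Prop :=
  (∀ a, r a a) ∧ ∀ a b c, r a b → r b c → r a c

/-- The symmetrization `x ∼ y` of a preorder relation. -/
def Sim (r : α → α → Prop) (x y : α) : Prop := r x y ∧ r y x

/-- The quotient preorder `T/T'`: the transitive closure of
`x R y ⟺ (x ≤_T y or y ≤_{T'} x)`. -/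
def QuotRel (r r' : α → α → Prop) : α → α → Prop :=
  Relation.TransGen (fun x y => r x y ∨ r' y x)

/-- The identity-on-objects monotone map of preorders `T' → T` is admissible. -/
def Admissible (r' r : α → α → Prop) : Prop :=
  (∀ x y, r' x y → r x y) ∧
  (∀ Y : Set α, ConnectedIn r' Y → ∀ x ∈ Y, ∀ y ∈ Y, (r x y ↔ r' x y)) ∧
  (∀ x y, Sim (QuotRel r r') x y ↔ Sim (QuotRel r' r') x y)

/-- The identity-on-objects monotone map of preorders `T → V` is a contraction of preorders. -/
def PreContraction (r v : α → α → Prop) : Prop :=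
  (∀ x y, r x y → v x y) ∧
  (∀ x, ConnectedIn r {y | Sim v x y}) ∧
  ∀ a a', CovRel v a a' → ∃ t t', CovRel r t t' ∧ t = a ∧ t' = a'

/-- The setoid on `α` whose relation is the symmetrization of the preorder relation `r`. -/
def simSetoid (r : α → α → Prop) (h : IsPreorderRel r) : Setoid α where
  r := Sim r
  iseqv := ⟨fun x => ⟨h.1 x, h.1 x⟩, fun hxy => ⟨hxy.2, hxy.1⟩,
    fun h1 h2 => ⟨h.2 _ _ _ h1.1 h2.1, h.2 _ _ _ h2.2 h1.2⟩⟩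

/-- The partial order relation on the posetification (antisymmetrization) of a preorder. -/
def posetLe (r : α → α → Prop) (h : IsPreorderRel r) :
    Quotient (simSetoid r h) → Quotient (simSetoid r h) → Prop :=
  Quotient.lift₂ r (fun _ _ _ _ hx hy => propext
    ⟨fun hr => h.2 _ _ _ (h.2 _ _ _ hx.2 hr) hy.1,
     fun hr => h.2 _ _ _ (h.2 _ _ _ hx.1 hr) hy.2⟩)

/-- A tree: a poset with a greatest element in which every interval is linearly ordered. -/
def IsTreeRel (r : α → α → Prop) : Prop :=
  (∃ t, ∀ p, r p t) ∧
  ∀ p p' z w, r p z → r z p' → r p w → r w p' → (r z w ∨ r w z)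

/-- The connected component of `p` w.r.t. the order relation `r`. -/
def component (r : α → α → Prop) (p : α) : Set α :=
  {q | Relation.ReflTransGen (fun a b => r a b ∨ r b a) p q}

/-- A forest: a poset each of whose connected components is a tree. -/
def IsForestRel (r : α → α → Prop) : Prop :=
  ∀ p, IsTreeRel (fun a b : component r p => r a.1 b.1)

end Defs

/-!
The intermediate preorder is `P = T ⊓ Q`, and no other one works: `P ≤ T` and `P ≤ P/T' = Q`,
while `x ≤_Q y` makes `x, y` `P`-connected (as `T' ≤ P`), so admissibility of `P → T`
turns `x ≤_T y` into `x ≤_P y`.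

For existence, the key point is `Q ≤ P/T'`. If `x ≤_Q y`, every point of a `T/T'`-zigzag
from `x` to `y` is `T/T'`-between `x` and `y`, hence lies in the `Q`-component of `x` by
admissibility of `Q → T/T'`; the same admissibility then makes each `T`-step of the zigzag
a `Q`-step.
-/

open Relation

section Component

variable {α : Type*} {r r' : α → α → Prop} {x y z : α}

theorem mem_component_self : x ∈ component r x := ReflTransGen.refl

theorem mem_component_of_rel (h : r x y) : y ∈ component r x := ReflTransGen.single (Or.inl h)

theorem mem_component_trans (hy : y ∈ component r x) (hz : z ∈ component r y) :
    z ∈ component r x :=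
  ReflTransGen.trans hy hz

theorem mem_component_symm (h : y ∈ component r x) : x ∈ component r y := by
  induction h with
  | refl => exact mem_component_self
  | tail _ hbc ih => exact ReflTransGen.head (Or.symm hbc) ih

theorem component_subset (h : ∀ a b, r a b → b ∈ component r' a) :
    component r x ⊆ component r' x :=
  fun _ hy => reflTransGen_closed
    (fun a b hab => hab.elim (h a b) fun hba => mem_component_symm (h b a hba)) _ _ hy

theorem connectedIn_component (r : α → α → Prop) (x : α) :
    ConnectedIn r (component r x) := by
  have from_x : ∀ y ∈ component r x, ReflTransGen
      (fun a b => a ∈ component r x ∧ b ∈ component r x ∧ (r a b ∨ r b a)) x y := by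
    intro y hy
    induction hy with
    | refl => exact ReflTransGen.refl
    | tail hxb hbc ih => exact ih.tail ⟨hxb, hxb.tail hbc, hbc⟩
  intro u hu v hv
  refine .trans (ReflTransGen.mono ?_ _ _ (ReflTransGen.swap _ _ (from_x u hu))) (from_x v hv)
  exact fun a b ⟨ha, hb, hab⟩ => ⟨hb, ha, hab.symm⟩

theorem ConnectedIn.subset_component {Y : Set α} (hY : ConnectedIn r Y) (hx : x ∈ Y) :
    Y ⊆ component r x :=
  fun y hy => ReflTransGen.mono (fun _ _ h => h.2.2) _ _ (hY x hx y hy)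

end Component

theorem Relation.TransGen.interval {α : Type*} {s : α → α → Prop} {x y : α}
    (h : TransGen s x y) :
    TransGen (fun a b => ReflTransGen s x a ∧ s a b ∧ ReflTransGen s b y) x y := by
  suffices ∀ a, TransGen s a y → ReflTransGen s x a →
      TransGen (fun a b => ReflTransGen s x a ∧ s a b ∧ ReflTransGen s b y) a y from
    this x h ReflTransGen.refl
  intro a hay
  induction hay using TransGen.head_induction_on with
  | single hab => exact fun hxa => .single ⟨hxa, hab, .refl⟩
  | head hab hby ih =>
    exact fun hxa => .head ⟨hxa, hab, hby.to_reflTransGen⟩ (ih (hxa.tail hab))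

section QuotRel

variable {α : Type*} {r r' s : α → α → Prop} {x y : α}

theorem IsPreorderRel.inf (hr : IsPreorderRel r) (hs : IsPreorderRel s) :
    IsPreorderRel (r ⊓ s) :=
  ⟨fun a => ⟨hr.1 a, hs.1 a⟩,
    fun _ _ _ hab hbc => ⟨hr.2 _ _ _ hab.1 hbc.1, hs.2 _ _ _ hab.2 hbc.2⟩⟩

theorem quotRel_le (hs : ∀ a b c, s a b → s b c → s a c) (hr : ∀ a b, r a b → s a b)
    (hr' : ∀ a b, r' a b → s b a) (h : QuotRel r r' x y) : s x y := by
  induction h with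
  | single hab => exact hab.elim (hr _ _) (hr' _ _)
  | tail _ hbc ih => exact hs _ _ _ ih (hbc.elim (hr _ _) (hr' _ _))

theorem quotRel_mem_component (h : ∀ a b, r' a b → r a b) (hxy : QuotRel r r' x y) :
    y ∈ component r x :=
  quotRel_le (s := fun a b => b ∈ component r a) (fun _ _ _ => mem_component_trans)
    (fun _ _ => mem_component_of_rel)
    (fun _ _ hab => mem_component_symm (mem_component_of_rel (h _ _ hab))) hxy

theorem sim_quotRel_of_mem_component (hr : ∀ a, r a a) (h : ∀ a b, r' a b → r a b)
    (hxy : y ∈ component r' x) : Sim (QuotRel r r') x y := by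
  induction hxy with
  | refl => exact ⟨.single (Or.inl (hr _)), .single (Or.inl (hr _))⟩
  | @tail b c _ hbc ih =>
    have hstep : Sim (QuotRel r r') b c := hbc.elim
      (fun h' => ⟨.single (Or.inl (h _ _ h')), .single (Or.inr h')⟩)
      (fun h' => ⟨.single (Or.inr h'), .single (Or.inl (h _ _ h'))⟩)
    exact ⟨ih.1.trans hstep.1, hstep.2.trans ih.2⟩

theorem sim_quotRel_self_iff (hr : ∀ a, r a a) : Sim (QuotRel r r) x y ↔ y ∈ component r x :=
  ⟨fun h => quotRel_mem_component (fun _ _ => id) h.1,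
    sim_quotRel_of_mem_component hr fun _ _ => id⟩

end QuotRel

namespace Admissible

variable {α : Type*} {q c : α → α → Prop} {x y a b : α}

theorem le_of_mem_component (h : Admissible q c) (hxy : c x y) (hy : y ∈ component q x) :
    q x y :=
  (h.2.1 _ (connectedIn_component q x) x mem_component_self y hy).mp hxy

theorem mem_component_of_sim (h : Admissible q c) (hq : ∀ a, q a a)
    (hxy : Sim (QuotRel c q) x y) : y ∈ component q x :=
  (sim_quotRel_self_iff hq).mp ((h.2.2 x y).mp hxy)

theorem sim_iff (h : Admissible q c) (hq : ∀ a, q a a) : Sim q x y ↔ Sim c x y := by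
  refine ⟨fun hs => ⟨h.1 _ _ hs.1, h.1 _ _ hs.2⟩, fun hs => ?_⟩
  have hy := h.mem_component_of_sim hq ⟨.single (Or.inl hs.1), .single (Or.inl hs.2)⟩
  exact ⟨h.le_of_mem_component hs.1 hy, h.le_of_mem_component hs.2 (mem_component_symm hy)⟩

theorem le_of_between (h : Admissible q c) (hq : ∀ a, q a a)
    (hc : ∀ a b d, c a b → c b d → c a d) (hxy : q x y)
    (hxa : c x a) (hab : c a b) (hby : c b y) : q a b := by
  have between : ∀ {z}, c x z → c z y → z ∈ component q x := fun hxz hzy =>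
    h.mem_component_of_sim hq ⟨.single (Or.inl hxz), .head (Or.inl hzy) (.single (Or.inr hxy))⟩
  exact h.le_of_mem_component hab <| mem_component_trans
    (mem_component_symm (between hxa (hc _ _ _ hab hby))) (between (hc _ _ _ hxa hab) hby)

end Admissible

section Intermediate

variable {X : Type*} {rT' rT rQ rP : X → X → Prop} {x y : X}

theorem Admissible.sim_of_admissible_quotRel (hadm : Admissible rT' rT)
    (hQadm : Admissible rQ (QuotRel rT rT')) (hQ : ∀ a, rQ a a) (h : rT' x y) : Sim rQ x y :=
  (hQadm.sim_iff hQ).mpr ⟨.single (Or.inl (hadm.1 _ _ h)), .single (Or.inr h)⟩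

theorem quotRel_inf_iff (hT : ∀ a, rT a a) (hadm : Admissible rT' rT)
    (hQadm : Admissible rQ (QuotRel rT rT')) (hQ : IsPreorderRel rQ) :
    QuotRel (rT ⊓ rQ) rT' x y ↔ rQ x y := by
  refine ⟨quotRel_le hQ.2 (fun _ _ h => h.2)
    (fun _ _ h => (hadm.sim_of_admissible_quotRel hQadm hQ.1 h).2), fun hxy => ?_⟩
  have toQuotRel : ∀ {u v}, ReflTransGen (fun a b => rT a b ∨ rT' b a) u v →
      QuotRel rT rT' u v := fun huv =>
    (reflTransGen_iff_eq_or_transGen.mp huv).elim (fun h => h ▸ .single (Or.inl (hT _))) id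
  refine TransGen.mono ?_ _ _ (hQadm.1 _ _ hxy).interval
  rintro a b ⟨hxa, hab | hba, hby⟩
  · exact Or.inl ⟨hab, hQadm.le_of_between hQ.1 (fun _ _ _ => TransGen.trans) hxy
      (toQuotRel hxa) (.single (Or.inl hab)) (toQuotRel hby)⟩
  · exact Or.inr hba

theorem admissible_lower_of_quotRel_iff (hadm : Admissible rT' rT)
    (hQadm : Admissible rQ (QuotRel rT rT')) (hQ : ∀ a, rQ a a)
    (hT'P : ∀ x y, rT' x y → rP x y) (hPT : ∀ x y, rP x y → rT x y)
    (hquot : ∀ x y, QuotRel rP rT' x y ↔ rQ x y) : Admissible rT' rP := by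
  refine ⟨hT'P, fun Y hY x hx y hy =>
    ⟨fun h => (hadm.2.1 Y hY x hx y hy).mp (hPT _ _ h), hT'P x y⟩, fun x y => ?_⟩
  calc Sim (QuotRel rP rT') x y ↔ Sim rQ x y := and_congr (hquot x y) (hquot y x)
    _ ↔ Sim (QuotRel rT rT') x y := hQadm.sim_iff hQ
    _ ↔ Sim (QuotRel rT' rT') x y := hadm.2.2 x y

theorem admissible_inf (hT : ∀ a, rT a a) (hQadm : Admissible rQ (QuotRel rT rT'))
    (hQ : ∀ a, rQ a a) (hT'P : ∀ x y, rT' x y → (rT ⊓ rQ) x y)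
    (hquot : ∀ x y, rQ x y → QuotRel (rT ⊓ rQ) rT' x y) : Admissible (rT ⊓ rQ) rT := by
  have hP : ∀ a, (rT ⊓ rQ) a a := fun a => ⟨hT a, hQ a⟩
  refine ⟨fun _ _ h => h.1, fun Y hY x hx y hy => ⟨fun h => ⟨h, ?_⟩, fun h => h.1⟩,
    fun x y => ⟨fun hs => ?_, fun hs => ?_⟩⟩
  · exact hQadm.le_of_mem_component (.single (Or.inl h))
      (component_subset (fun _ _ hab => mem_component_of_rel hab.2) (hY.subset_component hx hy))
  · have toQuot : ∀ {u v}, QuotRel rT (rT ⊓ rQ) u v → QuotRel (QuotRel rT rT') rQ u v :=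
      quotRel_le (fun _ _ _ => TransGen.trans) (fun _ _ h => .single (Or.inl (.single (Or.inl h))))
        (fun _ _ h => .single (Or.inr h.2))
    have hQy := hQadm.mem_component_of_sim hQ ⟨toQuot hs.1, toQuot hs.2⟩
    exact (sim_quotRel_self_iff hP).mpr
      (component_subset (fun a b h => quotRel_mem_component hT'P (hquot a b h)) hQy)
  · exact sim_quotRel_of_mem_component hT (fun _ _ h => h.1) ((sim_quotRel_self_iff hP).mp hs)

theorem eq_inf_of_admissible (hT'P : ∀ x y, rT' x y → rP x y) (hPT : Admissible rP rT)
    (hquot : ∀ x y, QuotRel rP rT' x y ↔ rQ x y) : rP = rT ⊓ rQ := by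
  funext x y
  exact propext ⟨fun h => ⟨hPT.1 _ _ h, (hquot x y).mp (.single (Or.inl h))⟩,
    fun h => hPT.le_of_mem_component h.1 (quotRel_mem_component hT'P ((hquot x y).mpr h.2))⟩

end Intermediate

theorem unique_intermediate_preorder_general {X : Type*} (rT' rT rQ : X → X → Prop)
    (hT : IsPreorderRel rT) (hQ : IsPreorderRel rQ)
    (hadm : Admissible rT' rT)
    (hQadm : Admissible rQ (QuotRel rT rT')) :
    ∃! rP : X → X → Prop,
      IsPreorderRel rP ∧
      (∀ x y, rT' x y → rP x y) ∧ (∀ x y, rP x y → rT x y) ∧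
      Admissible rT' rP ∧ Admissible rP rT ∧
      ∀ x y, QuotRel rP rT' x y ↔ rQ x y := by
  have hT'P : ∀ x y, rT' x y → (rT ⊓ rQ) x y := fun x y h =>
    ⟨hadm.1 x y h, (hadm.sim_of_admissible_quotRel hQadm hQ.1 h).1⟩
  have hquot : ∀ x y, QuotRel (rT ⊓ rQ) rT' x y ↔ rQ x y := fun _ _ =>
    quotRel_inf_iff hT.1 hadm hQadm hQ
  refine ⟨rT ⊓ rQ, ⟨hT.inf hQ, hT'P, fun _ _ h => h.1,
    admissible_lower_of_quotRel_iff hadm hQadm hQ.1 hT'P (fun _ _ h => h.1) hquot,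
    admissible_inf hT.1 hQadm hQ.1 hT'P (fun x y => (hquot x y).mpr), hquot⟩, ?_⟩
  rintro rP ⟨-, hT'P', -, -, hPT, hquot'⟩
  exact eq_inf_of_admissible hT'P' hPT hquot'

/-- given admissible `T' → T` and admissible `Q → T/T'`, there is a
unique intermediate preorder `P` with `T' → P` and `P → T` admissible and `P/T' = Q`. -/
theorem unique_intermediate_preorder {X : Type*} (rT' rT rQ : X → X → Prop)
    (hT' : IsPreorderRel rT') (hT : IsPreorderRel rT) (hQ : IsPreorderRel rQ)
    (hsub : ∀ x y, rT' x y → rT x y)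
    (hadm : Admissible rT' rT)
    (hQsub : ∀ x y, rQ x y → QuotRel rT rT' x y)
    (hQadm : Admissible rQ (QuotRel rT rT')) :
    ∃! rP : X → X → Prop,
      IsPreorderRel rP ∧
      (∀ x y, rT' x y → rP x y) ∧ (∀ x y, rP x y → rT x y) ∧
      Admissible rT' rP ∧ Admissible rP rT ∧
      ∀ x y, QuotRel rP rT' x y ↔ rQ x y :=
  unique_intermediate_preorder_general rT' rT rQ hT hQ hadm hQadm
end

section
/- Let f : P → Q be a collapse map of finite posets, and for each q ∈ Q let W_q be a finite poset and h_q : f⁻¹(q) → W_q a collapse map (where the fibre f⁻¹(q) carries the order induced from P). Then there is a unique partial order on the set W := Σ_{q∈Q} W_q such that: (i) the map h : P → W sending p (with f(p) = q) to (q, h_q(p)) is a collapse map; (ii) the map g : W → Q, (q, w) ↦ q, is a collapse map; (iii) g ∘ h = f; and (iv) for each q ∈ Q the inclusion W_q → W, w ↦ (q, w), is a convex order-embedding. -/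
/-- The conditions required of the glued partial order `le` on `W = Σ q, W q`
(collapse-map version). -/
def GlueCollapseProp {P Q : Type*} [PartialOrder P] [PartialOrder Q]
    (f : P → Q) (W : Q → Type*) [∀ q, PartialOrder (W q)]
    (hmap : ∀ q, {p : P // f p = q} → W q)
    (le : ((q : Q) × W q) → ((q : Q) × W q) → Prop) : Prop :=
  IsPartialOrderRel le ∧
  -- (i) `h : P → W`, `p ↦ (f p, h_{f p} p)` is a collapse map
  IsCollapse (fun a b : P => a ≤ b) le
    (fun p => ⟨f p, hmap (f p) ⟨p, rfl⟩⟩) ∧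
  -- (ii) `g : W → Q`, `(q, w) ↦ q` is a collapse map
  IsCollapse le (fun a b : Q => a ≤ b) (fun w => w.1) ∧
  -- (iii) `g ∘ h = f`
  (∀ p : P, (show (q : Q) × W q from ⟨f p, hmap (f p) ⟨p, rfl⟩⟩).1 = f p) ∧
  -- (iv) each inclusion `W q → W` is a convex order-embedding
  ∀ q : Q, ConvexMap (fun a b : W q => a ≤ b) le
      (fun w => (⟨q, w⟩ : (q : Q) × W q)) ∧
    ∀ w w' : W q, le ⟨q, w⟩ ⟨q, w'⟩ ↔ w ≤ w'

/-!
The glued order is forced to be the lexicographic order on `Σₗ q, W q`: since `Sigma.fst` is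
monotone and reflects the strict order, elements over distinct points of `Q` compare as their
indices do, and since the inclusions are order-embeddings, elements over the same point compare
as in `W q`. Conversely, the lexicographic order has all the required properties, the collapse
property of `p ↦ (f p, h_{f p} p)` being checked separately over `f x < f y` and `f x = f y`.
-/

theorem isPartialOrderRel_le {α : Type*} [PartialOrder α] :
    IsPartialOrderRel (· ≤ · : α → α → Prop) :=
  ⟨le_refl, fun _ _ _ => le_trans, fun _ _ => le_antisymm⟩

namespace Sigma.Lex

variable {ι : Type*} {α : ι → Type*}

theorem mk_le_mk_iff [Preorder ι] [∀ i, LE (α i)] {i : ι} {a b : α i} :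
    toLex (⟨i, a⟩ : Σ i, α i) ≤ toLex ⟨i, b⟩ ↔ a ≤ b := by
  refine ⟨fun h => ?_, fun h => Sigma.Lex.right _ _ h⟩
  cases h with
  | left _ _ hlt => exact absurd hlt (lt_irrefl i)
  | right _ _ hle => exact hle

theorem fst_le_fst [Preorder ι] [∀ i, LE (α i)] {x y : Σ i, α i}
    (h : toLex x ≤ toLex y) : x.1 ≤ y.1 := by
  cases h with
  | left _ _ hlt => exact hlt.le
  | right _ _ => exact le_rfl

theorem isCollapse_fst [Preorder ι] [∀ i, Preorder (α i)] [∀ i, Nonempty (α i)] :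
    IsCollapse (fun x y : Σ i, α i => toLex x ≤ toLex y) (· ≤ ·) Sigma.fst := by
  refine ⟨fun _ _ => fst_le_fst, fun i => ⟨⟨i, Classical.arbitrary _⟩, rfl⟩, ?_⟩
  rintro x y ⟨hxy, hyx⟩
  exact ⟨Sigma.Lex.left _ _ (lt_of_le_not_ge hxy hyx), fun h => hyx (fst_le_fst h)⟩

theorem convexMap_mk [PartialOrder ι] [∀ i, Preorder (α i)] (i : ι) :
    ConvexMap (· ≤ ·) (fun x y : Σ i, α i => toLex x ≤ toLex y) (Sigma.mk i) := by
  refine ⟨fun _ _ => mk_le_mk_iff.2, ?_⟩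
  rintro a b ⟨j, c⟩ hac hcb
  obtain rfl : i = j := le_antisymm (fst_le_fst hac) (fst_le_fst hcb)
  exact ⟨c, ⟨mk_le_mk_iff.1 hac, mk_le_mk_iff.1 hcb, rfl⟩, fun _ h => sigma_mk_injective h.2.2⟩

theorem eq_le_of_isCollapse_fst [PartialOrder ι] [∀ i, LE (α i)]
    {le : (Σ i, α i) → (Σ i, α i) → Prop} (hmono : Mono le (· ≤ ·) Sigma.fst)
    (hlt : ∀ x y, LtRel (· ≤ ·) x.1 y.1 → LtRel le x y)
    (hfib : ∀ i (a b : α i), le ⟨i, a⟩ ⟨i, b⟩ ↔ a ≤ b) :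
    le = fun x y => toLex x ≤ toLex y := by
  ext ⟨i, a⟩ ⟨j, b⟩
  constructor
  · intro h
    obtain hij | rfl := (hmono _ _ h).lt_or_eq
    · exact Sigma.Lex.left _ _ hij
    · exact mk_le_mk_iff.2 ((hfib i a b).1 h)
  · rintro (⟨_, _, hij⟩ | ⟨a, b, hab⟩)
    · exact (hlt _ _ ⟨hij.le, hij.not_ge⟩).1
    · exact (hfib _ a b).2 hab

end Sigma.Lex

section Glue

variable {P Q : Type*} {f : P → Q} {W : Q → Type*}

def glueMap (f : P → Q) (hmap : ∀ q, {p : P // f p = q} → W q) (p : P) : Σ q, W q :=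
  ⟨f p, hmap (f p) ⟨p, rfl⟩⟩

theorem glueMap_eq_mk (hmap : ∀ q, {p : P // f p = q} → W q) {p : P} {q : Q} (hp : f p = q) :
    glueMap f hmap p = ⟨q, hmap q ⟨p, hp⟩⟩ := by
  subst hp; rfl

theorem isCollapse_glueMap [Preorder P] [PartialOrder Q] [∀ q, Preorder (W q)]
    (hf_mono : Mono (· ≤ ·) (· ≤ ·) f)
    (hf_lt : ∀ x y, LtRel (· ≤ ·) (f x) (f y) → LtRel (· ≤ ·) x y)
    (hmap : ∀ q, {p : P // f p = q} → W q)
    (hcoll : ∀ q, IsCollapse (fun a b : {p : P // f p = q} => a.1 ≤ b.1)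
      (fun a b : W q => a ≤ b) (hmap q)) :
    IsCollapse (· ≤ ·) (fun x y : Σ q, W q => toLex x ≤ toLex y) (glueMap f hmap) := by
  refine ⟨fun x y hxy => ?_, fun ⟨q, w⟩ => ?_, fun x y ⟨hxy, hyx⟩ => ?_⟩
  · obtain hlt | e := (hf_mono x y hxy).lt_or_eq
    · exact Sigma.Lex.left _ _ hlt
    · rw [glueMap_eq_mk hmap e]
      exact Sigma.Lex.mk_le_mk_iff.2 ((hcoll (f y)).1 ⟨x, e⟩ ⟨y, rfl⟩ hxy)
  · obtain ⟨⟨p, hp⟩, rfl⟩ := (hcoll q).2.1 w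
    exact ⟨p, glueMap_eq_mk hmap hp⟩
  · have hfxy : f x ≤ f y := Sigma.Lex.fst_le_fst hxy
    by_cases hfyx : f y ≤ f x
    · have e : f x = f y := le_antisymm hfxy hfyx
      rw [glueMap_eq_mk hmap e] at hxy hyx
      exact (hcoll (f y)).2.2 ⟨x, e⟩ ⟨y, rfl⟩
        ⟨Sigma.Lex.mk_le_mk_iff.1 hxy, fun h => hyx (Sigma.Lex.mk_le_mk_iff.2 h)⟩
    · exact hf_lt x y ⟨hfxy, hfyx⟩

end Glue

theorem glue_collapses_unique_order_general
    {P Q : Type*} [PartialOrder P] [PartialOrder Q]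
    (f : P → Q)
    (hf : IsCollapse (fun a b : P => a ≤ b) (fun a b : Q => a ≤ b) f)
    (W : Q → Type*) [∀ q, PartialOrder (W q)]
    (hmap : ∀ q, {p : P // f p = q} → W q)
    (hcoll : ∀ q, IsCollapse (fun a b : {p : P // f p = q} => a.1 ≤ b.1)
      (fun a b : W q => a ≤ b) (hmap q)) :
    ∃! le : ((q : Q) × W q) → ((q : Q) × W q) → Prop,
      GlueCollapseProp f W hmap le := by
  have : ∀ q, Nonempty (W q) := fun q =>
    let ⟨p, hp⟩ := hf.2.1 q
    ⟨hmap q ⟨p, hp⟩⟩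
  refine ⟨fun x y => toLex x ≤ toLex y, ⟨isPartialOrderRel_le (α := Σₗ q, W q),
    isCollapse_glueMap hf.1 hf.2.2 hmap hcoll, Sigma.Lex.isCollapse_fst, fun _ => rfl,
    fun q => ⟨Sigma.Lex.convexMap_mk q, fun _ _ => Sigma.Lex.mk_le_mk_iff⟩⟩, ?_⟩
  rintro le ⟨-, -, hg, -, hfib⟩
  exact Sigma.Lex.eq_le_of_isCollapse_fst hg.1 hg.2.2 fun q => (hfib q).2

/-- gluing collapse maps over the fibres of a collapse map of
finite posets: there is a unique suitable partial order on `Σ q, W q`. -/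
theorem glue_collapses_unique_order
    {P Q : Type*} [PartialOrder P] [PartialOrder Q] [Fintype P] [Fintype Q]
    (f : P → Q)
    (hf : IsCollapse (fun a b : P => a ≤ b) (fun a b : Q => a ≤ b) f)
    (W : Q → Type*) [∀ q, PartialOrder (W q)] [∀ q, Fintype (W q)]
    (hmap : ∀ q, {p : P // f p = q} → W q)
    (hcoll : ∀ q, IsCollapse (fun a b : {p : P // f p = q} => a.1 ≤ b.1)
      (fun a b : W q => a ≤ b) (hmap q)) :
    ∃! le : ((q : Q) × W q) → ((q : Q) × W q) → Prop,
      GlueCollapseProp f W hmap le :=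
  glue_collapses_unique_order_general f hf W hmap hcoll
end
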